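/- Define α_k = ∑_{i=0}^{k−1}(n_i + 2) + û_k and β_k = k², where n_i = û_i + i² + ŝ_{i+1} with 0 ≤ û_i + ŝ_{i+1} ≤ C·i for a constant C > 0. Let k_N be the greatest integer with α_{k_N} + β_{k_N} ≤ N − 1. Then for every ε > 0 and q ∈ ℕ, there exists N₀ such that for all N ≥ N₀, the proportion of integers n ∈ [0, N−1] lying in ⋃_{k≥1} [α_k + q, α_k + β_k − q] is at least 1 − ε. -/

import Mathlib

open scoped Classical

lemma sumsq_aux (K : ℕ) : 6 * ∑ i ∈ Finset.range (K+1), i^2 = K*(K+1)*(2*K+1) := by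
  induction K with
  | zero => simp
  | succ n ih => rw [Finset.sum_range_succ, Nat.mul_add, ih]; ring

lemma cube_le_aux {K : ℕ} (hK : 3 ≤ K) : K^3 ≤ 6 * ∑ i ∈ Finset.range K, i^2 := by
  obtain ⟨M, rfl⟩ : ∃ M, K = M + 1 := ⟨K - 1, by omega⟩
  have hM : 2 ≤ M := by omega
  have a1 : 2*M ≤ M*M := Nat.mul_le_mul_right M hM
  have a2 : 2*(M*M) ≤ M*(M*M) := Nat.mul_le_mul_right _ hM
  rw [sumsq_aux]
  nlinarith [a1, a2]

set_option maxHeartbeats 1600000 in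
theorem stmt_16 (C : ℝ) (hC : 0 < C) (u s : ℕ → ℝ)
    (hu : ∀ k, 0 ≤ u k) (hs : ∀ k, 0 ≤ s k)
    (hlin : ∀ k : ℕ, u k + s (k + 1) ≤ C * k) :
    ∀ ε : ℝ, 0 < ε → ∀ q : ℕ, ∃ N₀ : ℕ, ∀ N : ℕ, N₀ ≤ N →
      (1 - ε) * N ≤
        (((Finset.range N).filter fun m : ℕ => ∃ k : ℕ, 1 ≤ k ∧
          (∑ i ∈ Finset.range k, ((u i + (i : ℝ) ^ 2 + s (i + 1)) + 2)) + u k + q ≤ (m : ℝ) ∧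
          (m : ℝ) ≤
            (∑ i ∈ Finset.range k, ((u i + (i : ℝ) ^ 2 + s (i + 1)) + 2)) + u k + (k : ℝ) ^ 2 - q).card : ℝ) := by
  intro ε hε q
  set A : ℕ → ℝ := fun k => ∑ i ∈ Finset.range k, ((u i + (i : ℝ) ^ 2 + s (i + 1)) + 2) with hA
  set α : ℕ → ℝ := fun k => A k + u k with hαdef
  -- basic facts about α
  have htermnn : ∀ i : ℕ, (0:ℝ) ≤ (u i + (i : ℝ) ^ 2 + s (i + 1)) + 2 := by
    intro i
    have := hu i; have := hs (i+1); positivity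
  have hA0 : ∀ k, 0 ≤ A k := fun k => Finset.sum_nonneg (fun i _ => htermnn i)
  have hα0 : ∀ k, 0 ≤ α k := fun k => add_nonneg (hA0 k) (hu k)
  have hstep : ∀ k : ℕ, α k + (k:ℝ)^2 + 2 ≤ α (k+1) := by
    intro k
    have h1 : A (k+1) = A k + ((u k + (k:ℝ)^2 + s (k+1)) + 2) := Finset.sum_range_succ _ k
    have := hs (k+1); have := hu (k+1)
    simp only [hαdef, h1]; linarith
  have hαmono : Monotone α := by
    apply monotone_nat_of_le_succ
    intro k
    have := hstep k
    have : (0:ℝ) ≤ (k:ℝ)^2 := by positivity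
    linarith [hstep k]
  have hαlow : ∀ k, (∑ i ∈ Finset.range k, (i:ℝ)^2) ≤ α k := by
    intro k
    have h1 : (∑ i ∈ Finset.range k, (i:ℝ)^2) ≤ A k := by
      apply Finset.sum_le_sum
      intro i _
      have := hu i; have := hs (i+1); linarith
    have := hu k
    simp only [hαdef]; linarith
  have huk : ∀ k : ℕ, u k ≤ C * k := by
    intro k
    have := hs (k+1); have := hlin k; linarith
  have hαup : ∀ k : ℕ, α k ≤ C * (∑ i ∈ Finset.range k, (i:ℝ)) +
      (∑ i ∈ Finset.range k, (i:ℝ)^2) + 2*k + C*k := by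
    intro k
    have h1 : A k ≤ ∑ i ∈ Finset.range k, (C * i + (i:ℝ)^2 + 2) := by
      apply Finset.sum_le_sum
      intro i _
      have := hlin i; linarith
    have h2 : ∑ i ∈ Finset.range k, (C * i + (i:ℝ)^2 + 2)
        = C * (∑ i ∈ Finset.range k, (i:ℝ)) + (∑ i ∈ Finset.range k, (i:ℝ)^2) + 2*k := by
      rw [Finset.sum_add_distrib, Finset.sum_add_distrib, Finset.mul_sum]
      simp [Finset.sum_const, Finset.card_range]
      ring
    have := huk k
    simp only [hαdef]; linarith
  -- the endpoints of the good intervals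
  set a : ℕ → ℕ := fun k => ⌈α k⌉₊ + q with hadef
  set b : ℕ → ℕ := fun k => a k + (k^2 - (2*q+1)) with hbdef
  have ha_ge : ∀ k, α k + q ≤ (a k : ℝ) := by
    intro k
    have := Nat.le_ceil (α k)
    push_cast [hadef]; linarith
  have hb_lt : ∀ k : ℕ, 2*q+2 ≤ k → (b k : ℝ) < α k + (k:ℝ)^2 - q := by
    intro k hk
    have hk2 : 2*q+1 ≤ k^2 := le_trans (by omega) (Nat.le_self_pow (by norm_num) k)
    have hceil : (⌈α k⌉₊ : ℝ) < α k + 1 := Nat.ceil_lt_add_one (hα0 k)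
    have hcast : (b k : ℝ) = (⌈α k⌉₊ : ℝ) + q + ((k:ℝ)^2 - (2*q+1)) := by
      simp only [hbdef, hadef]
      push_cast [hk2]
      ring
    rw [hcast]; push_cast; linarith
  -- constants
  set S₀ : ℝ := ∑ i ∈ Finset.range (2*q+2), (i:ℝ)^2 with hS₀
  have hS₀nn : 0 ≤ S₀ := Finset.sum_nonneg fun i _ => by positivity
  set D : ℝ := 2*C + 4 + S₀ + 2*q with hD
  have hD0 : 0 < D := by positivity
  set K₁ : ℕ := max (max 3 (2*q+2)) (⌈24*D/ε⌉₊ + 1) with hK₁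
  refine ⟨⌈α K₁ + (K₁:ℝ)^2⌉₊ + 2, ?_⟩
  intro N hN
  -- choose the maximal K
  set Kcand := (Finset.range (N+1)).filter (fun k => α k + (k:ℝ)^2 ≤ (N:ℝ) - 1) with hKcand
  have hceilN : (⌈α K₁ + (K₁:ℝ)^2⌉₊ : ℝ) + 2 ≤ (N:ℝ) := by
    exact_mod_cast Nat.cast_le.mpr hN
  have hK₁cond : α K₁ + (K₁:ℝ)^2 ≤ (N:ℝ) - 1 := by
    have := Nat.le_ceil (α K₁ + (K₁:ℝ)^2)
    linarith
  have hK₁leN : K₁ ≤ N := by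
    have h1 : (K₁:ℝ)^2 ≤ (N:ℝ) - 1 := by have := hα0 K₁; linarith
    have h2 : (K₁:ℝ) ≤ (K₁:ℝ)^2 := by
      have := Nat.le_self_pow (n := 2) (by norm_num) K₁
      exact_mod_cast this
    have : (K₁:ℝ) ≤ (N:ℝ) := by linarith
    exact_mod_cast this
  have hK₁mem : K₁ ∈ Kcand := by
    simp only [hKcand, Finset.mem_filter, Finset.mem_range]
    exact ⟨by omega, hK₁cond⟩
  have hne : Kcand.Nonempty := ⟨K₁, hK₁mem⟩
  set K : ℕ := Kcand.max' hne with hKdef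
  have hKmem := Kcand.max'_mem hne
  simp only [hKcand, Finset.mem_filter, Finset.mem_range] at hKmem
  have hKcond : α K + (K:ℝ)^2 ≤ (N:ℝ) - 1 := hKmem.2
  have hKge : K₁ ≤ K := Finset.le_max' _ _ hK₁mem
  have hK3 : 3 ≤ K := le_trans (le_trans (le_max_left 3 (2*q+2)) (le_max_left _ _)) hKge
  have hKq : 2*q+2 ≤ K := le_trans (le_trans (le_max_right 3 (2*q+2)) (le_max_left _ _)) hKge
  have hKbig : 24*D/ε ≤ (K:ℝ) := by
    have h1 : (⌈24*D/ε⌉₊ + 1 : ℕ) ≤ K := le_trans (le_max_right _ _) hKge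
    have h2 := Nat.le_ceil (24*D/ε)
    have h3 : ((⌈24*D/ε⌉₊ + 1 : ℕ) : ℝ) ≤ (K:ℝ) := by exact_mod_cast h1
    push_cast at h3
    linarith
  -- maximality : N is not much larger
  have hKltN : K + 1 ≤ N := by
    have h1 : (K:ℝ)^2 ≤ (N:ℝ) - 1 := by have := hα0 K; linarith
    have h2 : ((K^2 : ℕ) : ℝ) + 1 ≤ (N:ℝ) := by push_cast; linarith
    have h3 : K^2 + 1 ≤ N := by exact_mod_cast h2
    have h4 : K ≤ K^2 := Nat.le_self_pow (by norm_num) K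
    omega
  have hNup : (N:ℝ) ≤ α (K+1) + ((K:ℝ)+1)^2 + 2 := by
    by_contra hcon
    push_neg at hcon
    have hmem : K + 1 ∈ Kcand := by
      simp only [hKcand, Finset.mem_filter, Finset.mem_range]
      constructor
      · omega
      · push_cast; linarith
    have := Finset.le_max' Kcand (K+1) hmem
    omega
  -- the good set
  set G := (Finset.Icc (2*q+2) K).biUnion (fun k => Finset.Icc (a k) (b k)) with hG
  have hblt : ∀ k l : ℕ, 2*q+2 ≤ k → k < l → b k < a l := by
    intro k l hk hkl
    have h1 : (b k : ℝ) < α k + (k:ℝ)^2 - q := hb_lt k hk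
    have h2 := hstep k
    have h3 : α (k+1) ≤ α l := hαmono (by omega)
    have h4 := ha_ge l
    have : (b k : ℝ) < (a l : ℝ) := by push_cast at *; linarith
    exact_mod_cast this
  have hdisj : ∀ k ∈ Finset.Icc (2*q+2) K, ∀ l ∈ Finset.Icc (2*q+2) K, k ≠ l →
      Disjoint (Finset.Icc (a k) (b k)) (Finset.Icc (a l) (b l)) := by
    intro k hk l hl hne'
    simp only [Finset.mem_Icc] at hk hl
    rw [Finset.disjoint_left]
    intro m hm hm'
    simp only [Finset.mem_Icc] at hm hm'
    rcases lt_or_gt_of_ne hne' with h | h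
    · have := hblt k l hk.1 h; omega
    · have := hblt l k hl.1 h; omega
  -- G is contained in the filtered set
  have hGsub : G ⊆ (Finset.range N).filter fun m : ℕ => ∃ k : ℕ, 1 ≤ k ∧
      (∑ i ∈ Finset.range k, ((u i + (i : ℝ) ^ 2 + s (i + 1)) + 2)) + u k + q ≤ (m : ℝ) ∧
      (m : ℝ) ≤ (∑ i ∈ Finset.range k, ((u i + (i : ℝ) ^ 2 + s (i + 1)) + 2)) + u k + (k : ℝ) ^ 2 - q := by
    intro m hm
    simp only [hG, Finset.mem_biUnion, Finset.mem_Icc] at hm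
    obtain ⟨k, ⟨hk1, hk2⟩, hm1, hm2⟩ := hm
    have hup : (m:ℝ) ≤ α k + (k:ℝ)^2 - q := by
      have h1 : (m:ℝ) ≤ (b k : ℝ) := by exact_mod_cast hm2
      have h2 := hb_lt k hk1
      linarith
    have hlow : α k + q ≤ (m:ℝ) := by
      have h1 : (a k : ℝ) ≤ (m:ℝ) := by exact_mod_cast hm1
      have := ha_ge k
      linarith
    rw [Finset.mem_filter]
    constructor
    · rw [Finset.mem_range]
      have h1 : α k ≤ α K := hαmono hk2
      have h2 : (k:ℝ)^2 ≤ (K:ℝ)^2 := by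
        have : (k:ℝ) ≤ (K:ℝ) := by exact_mod_cast hk2
        nlinarith [Nat.cast_nonneg (α := ℝ) k]
      have h3 : (m:ℝ) < (N:ℝ) := by
        have hq : (0:ℝ) ≤ (q:ℕ) := Nat.cast_nonneg q
        linarith
      exact_mod_cast h3
    · exact ⟨k, by omega, by simpa [hαdef, hA] using hlow, by simpa [hαdef, hA] using hup⟩
  -- cardinality of G
  have hcard_int : ∀ k ∈ Finset.Icc (2*q+2) K, (Finset.Icc (a k) (b k)).card = k^2 - 2*q := by
    intro k hk
    simp only [Finset.mem_Icc] at hk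
    have hk2 : 2*q+1 ≤ k^2 := le_trans (by omega) (Nat.le_self_pow (by norm_num) k)
    rw [Nat.card_Icc]
    simp only [hbdef]
    omega
  have hGcard : G.card = ∑ k ∈ Finset.Icc (2*q+2) K, (k^2 - 2*q) := by
    rw [hG, Finset.card_biUnion hdisj]
    exact Finset.sum_congr rfl hcard_int
  -- nat inequality : sum of squares vs G.card
  have hnat : ∑ k ∈ Finset.range (K+1), k^2 ≤
      (∑ k ∈ Finset.Icc (2*q+2) K, (k^2 - 2*q)) + (∑ k ∈ Finset.range (2*q+2), k^2) + 2*q*(K+1) := by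
    have hsplit : ∑ k ∈ Finset.range (K+1), k^2
        = (∑ k ∈ Finset.range (2*q+2), k^2) + ∑ k ∈ Finset.Ico (2*q+2) (K+1), k^2 := by
      simp only [Finset.range_eq_Ico]
      exact (Finset.sum_Ico_consecutive _ (Nat.zero_le _) (by omega : 2*q+2 ≤ K+1)).symm
    have hIcoIcc : Finset.Ico (2*q+2) (K+1) = Finset.Icc (2*q+2) K := by
      rw [Finset.Ico_add_one_right_eq_Icc]
    have hbound : ∑ k ∈ Finset.Icc (2*q+2) K, k^2 ≤
        (∑ k ∈ Finset.Icc (2*q+2) K, (k^2 - 2*q)) + 2*q*(K+1) := by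
      have h1 : ∑ k ∈ Finset.Icc (2*q+2) K, k^2 ≤ ∑ k ∈ Finset.Icc (2*q+2) K, ((k^2 - 2*q) + 2*q) := by
        apply Finset.sum_le_sum
        intro k hk
        simp only [Finset.mem_Icc] at hk
        have : 2*q+1 ≤ k^2 := le_trans (by omega) (Nat.le_self_pow (by norm_num) k)
        omega
      rw [Finset.sum_add_distrib, Finset.sum_const, Nat.card_Icc, smul_eq_mul] at h1
      have h2 : (K + 1 - (2*q+2)) * (2*q) ≤ 2*q*(K+1) := by
        rw [mul_comm]
        exact Nat.mul_le_mul_left _ (by omega)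
      exact le_trans h1 (Nat.add_le_add_left h2 _)
    rw [hsplit, hIcoIcc]
    linarith [hbound]
  -- now real estimates
  set T : ℕ := ∑ k ∈ Finset.range (K+1), k^2 with hT
  have hGlow : (T:ℝ) - S₀ - 2*q*((K:ℝ)+1) ≤ (G.card : ℝ) := by
    have h1 : (T:ℝ) ≤ (G.card : ℝ) + S₀ + 2*q*((K:ℝ)+1) := by
      rw [hGcard]
      have := hnat
      have hcast : ((∑ k ∈ Finset.Icc (2*q+2) K, (k^2 - 2*q)) + (∑ k ∈ Finset.range (2*q+2), k^2) + 2*q*(K+1) : ℕ) = ((∑ k ∈ Finset.Icc (2*q+2) K, (k^2 - 2*q) : ℕ) : ℝ) + S₀ + 2*q*((K:ℝ)+1) → True := fun _ => trivial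
      have h2 : (T:ℝ) ≤ (((∑ k ∈ Finset.Icc (2*q+2) K, (k^2 - 2*q)) + (∑ k ∈ Finset.range (2*q+2), k^2) + 2*q*(K+1) : ℕ) : ℝ) := by
        exact_mod_cast hnat
      have h3 : (((∑ k ∈ Finset.Icc (2*q+2) K, (k^2 - 2*q)) + (∑ k ∈ Finset.range (2*q+2), k^2) + 2*q*(K+1) : ℕ) : ℝ)
          = ((∑ k ∈ Finset.Icc (2*q+2) K, (k^2 - 2*q) : ℕ) : ℝ) + S₀ + 2*q*((K:ℝ)+1) := by
        push_cast [hS₀]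
        ring
      rw [h3] at h2
      linarith
    linarith
  have hTcast : (T:ℝ) = ∑ i ∈ Finset.range (K+1), (i:ℝ)^2 := by
    rw [hT]; push_cast; ring
  -- upper bound for N
  have hsumi : (∑ i ∈ Finset.range (K+1), (i:ℝ)) ≤ ((K:ℝ)+1)^2 := by
    have h1 : (∑ i ∈ Finset.range (K+1), (i:ℝ)) ≤ ∑ i ∈ Finset.range (K+1), (K:ℝ) := by
      apply Finset.sum_le_sum
      intro i hi
      simp only [Finset.mem_range] at hi
      exact_mod_cast Nat.lt_succ_iff.mp hi
    rw [Finset.sum_const, Finset.card_range, nsmul_eq_mul] at h1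
    have h2 : (0:ℝ) ≤ (K:ℝ) := Nat.cast_nonneg K
    push_cast at h1 ⊢
    nlinarith
  have hNupper : (N:ℝ) ≤ C * ((K:ℝ)+1)^2 + (T:ℝ) + 2*((K:ℝ)+1) + C*((K:ℝ)+1) + ((K:ℝ)+1)^2 + 2 := by
    have h1 := hαup (K+1)
    have h2 := hNup
    rw [hTcast]
    push_cast at h1 ⊢
    have h3 : C * (∑ i ∈ Finset.range (K+1), (i:ℝ)) ≤ C * ((K:ℝ)+1)^2 :=
      mul_le_mul_of_nonneg_left hsumi (le_of_lt hC)
    linarith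
  -- N - G.card ≤ D * (K+1)^2
  have hKpos : (1:ℝ) ≤ (K:ℝ) := by exact_mod_cast Nat.one_le_iff_ne_zero.mpr (by omega)
  have hKp1sq : (1:ℝ) ≤ ((K:ℝ)+1)^2 := by nlinarith
  have hKp1 : ((K:ℝ)+1) ≤ ((K:ℝ)+1)^2 := by nlinarith
  have hdiff : (N:ℝ) - (G.card : ℝ) ≤ D * ((K:ℝ)+1)^2 := by
    have hq0 : (0:ℝ) ≤ (q:ℕ) := Nat.cast_nonneg q
    have h2q : 2*(q:ℝ)*((K:ℝ)+1) ≤ 2*(q:ℝ)*((K:ℝ)+1)^2 := by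
      apply mul_le_mul_of_nonneg_left hKp1
      positivity
    have hS : S₀ ≤ S₀ * ((K:ℝ)+1)^2 := le_mul_of_one_le_right hS₀nn hKp1sq
    have hC2 : C*((K:ℝ)+1) ≤ C*((K:ℝ)+1)^2 := mul_le_mul_of_nonneg_left hKp1 (le_of_lt hC)
    have h2K : 2*((K:ℝ)+1) ≤ 2*((K:ℝ)+1)^2 := by linarith [hKp1]
    rw [hD]
    have hexp : (2*C + 4 + S₀ + 2*(q:ℝ)) * ((K:ℝ)+1)^2
        = 2*(C*((K:ℝ)+1)^2) + 4*((K:ℝ)+1)^2 + S₀*((K:ℝ)+1)^2 + 2*(q:ℝ)*((K:ℝ)+1)^2 := by ring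
    rw [hexp]
    linarith [hGlow, hNupper, h2q, hS, hC2, h2K, hKp1sq]
  -- lower bound for N : N ≥ K^3/6
  have hNlow : (K:ℝ)^3 / 6 ≤ (N:ℝ) := by
    have h1 : (K^3 : ℕ) ≤ 6 * ∑ i ∈ Finset.range K, i^2 := cube_le_aux hK3
    have h2 : ((K:ℝ))^3 ≤ 6 * ∑ i ∈ Finset.range K, (i:ℝ)^2 := by
      have := h1
      have hcast : ((K^3 : ℕ):ℝ) ≤ ((6 * ∑ i ∈ Finset.range K, i^2 : ℕ):ℝ) := by exact_mod_cast h1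
      push_cast at hcast
      linarith
    have h3 : (∑ i ∈ Finset.range K, (i:ℝ)^2) ≤ α K := hαlow K
    have h4 : (0:ℝ) ≤ (K:ℝ)^2 := by positivity
    linarith [hKcond]
  -- final inequality
  have hεN : D * ((K:ℝ)+1)^2 ≤ ε * (N:ℝ) := by
    have h1 : 24*D ≤ ε * (K:ℝ) := by
      rw [div_le_iff₀ hε] at hKbig
      linarith
    have h2 : ((K:ℝ)+1)^2 ≤ 4*(K:ℝ)^2 := by nlinarith
    have h3 : D * ((K:ℝ)+1)^2 ≤ 4*D*(K:ℝ)^2 := by nlinarith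
    have h4 : 4*D*(K:ℝ)^2 ≤ ε * ((K:ℝ)^3/6) := by
      have hKsq : (0:ℝ) ≤ (K:ℝ)^2 := by positivity
      have := mul_le_mul_of_nonneg_right h1 hKsq
      nlinarith
    have h5 : ε * ((K:ℝ)^3/6) ≤ ε * (N:ℝ) := mul_le_mul_of_nonneg_left hNlow (le_of_lt hε)
    exact le_trans (le_trans h3 h4) h5
  have hfinal : (1 - ε) * (N:ℝ) ≤ (G.card : ℝ) := by
    have : (N:ℝ) - (G.card:ℝ) ≤ ε * (N:ℝ) := le_trans hdiff hεN
    linarith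
  calc (1 - ε) * (N:ℝ) ≤ (G.card : ℝ) := hfinal
    _ ≤ _ := by exact_mod_cast Nat.cast_le.mpr (Finset.card_le_card hGsub)
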